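/- Let n be a positive integer, C ⊆ ℝⁿ a convex set, φ : ℝⁿ → ℝ a convex function, ψ : ℝⁿ → ℝ a differentiable function, x₀ ∈ C, σ₁ ≥ 0, and σ₂ > 0. Suppose x⁺ ∈ C minimizes x ↦ φ(x) + ψ(x) + σ₁‖x − x₀‖₁ + (σ₂/2)‖x − x₀‖² over C, where ‖·‖ is the Euclidean norm and ‖d‖₁ := Σᵢ|dᵢ|. Then φ(x₀) + ψ(x₀) ≥ φ(x⁺) + ψ(x⁺) + σ₁‖x⁺ − x₀‖₁ + σ₂‖x⁺ − x₀‖² + ( ψ(x₀) − ψ(x⁺) − ⟨∇ψ(x⁺), x₀ − x⁺⟩ ). -/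

import Mathlib

open scoped RealInnerProductSpace
open Set

/-!
Restrict the problem to the segment `t ↦ x⁺ + t • (x₀ - x⁺)`, `t ∈ [0, 1]`. Strong convexity of
the nonsmooth part `f = φ + σ₁‖· - x₀‖₁ + (σ₂/2)‖· - x₀‖²` bounds `f` on the segment by a quadratic
in `t`, so minimality of `x⁺` makes `t ↦ ψ(x⁺ + t • (x₀ - x⁺))` plus that quadratic minimal at
`t = 0`. Its right derivative there is then nonnegative, which is the inequality
`f x⁺ + (σ₂/2)‖x₀ - x⁺‖² ≤ f x₀ + ⟪∇ψ(x⁺), x₀ - x⁺⟫`.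
-/

theorem HasDerivWithinAt.nonneg_of_isMinOn_Icc {k : ℝ → ℝ} {k' a b : ℝ} (hab : a < b)
    (hmin : IsMinOn k (Icc a b) a) (hk : HasDerivWithinAt k k' (Icc a b) a) : 0 ≤ k' := by
  have hcone : b - a ∈ posTangentConeAt (Icc a b) a :=
    sub_mem_posTangentConeAt_of_segment_subset (segment_eq_Icc hab.le).subset
  have : 0 ≤ (b - a) * k' := by
    simpa using hmin.localize.hasFDerivWithinAt_nonneg hk.hasFDerivWithinAt hcone
  exact nonneg_of_mul_nonneg_right this (sub_pos.2 hab)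

section StrongConvexity

variable {E : Type*} [NormedAddCommGroup E] [NormedSpace ℝ E] {s : Set E} {m : ℝ} {f g : E → ℝ}

theorem ConvexOn.add_strongConvexOn (hf : ConvexOn ℝ s f) (hg : StrongConvexOn s m g) :
    StrongConvexOn s m (f + g) := by
  simpa [StrongConvexOn] using hf.uniformConvexOn_zero.add hg

theorem StrongConvexOn.add_mul_sq_norm_sub_le_of_isMinOn_add {g' : E →L[ℝ] ℝ} {a x : E}
    (hf : StrongConvexOn s m f) (hg : HasFDerivAt g g' a) (ha : a ∈ s) (hx : x ∈ s)
    (hmin : IsMinOn (f + g) s a) :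
    f a + m / 2 * ‖x - a‖ ^ 2 ≤ f x + g' (x - a) := by
  set r := m / 2 * ‖x - a‖ ^ 2 with hr
  set k : ℝ → ℝ := fun t ↦ g (a + t • (x - a)) + t * (f x - f a - r) + t ^ 2 * r
  have hline : HasDerivAt (fun t : ℝ ↦ a + t • (x - a)) (x - a) 0 := by
    simpa using ((hasDerivAt_id (0 : ℝ)).smul_const (x - a)).const_add a
  have hk : HasDerivAt k (g' (x - a) + (f x - f a - r)) 0 := by
    have hgline : HasDerivAt (fun t : ℝ ↦ g (a + t • (x - a))) (g' (x - a)) 0 :=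
      hg.comp_hasDerivAt_of_eq 0 hline (by simp)
    exact ((hgline.add ((hasDerivAt_id 0).mul_const (f x - f a - r))).add
      ((hasDerivAt_pow 2 (0 : ℝ)).mul_const r)).congr_deriv (by simp)
  have hkmin : IsMinOn k (Icc 0 1) 0 := by
    rintro t ⟨ht₀, ht₁⟩
    have hxt : a + t • (x - a) = (1 - t) • a + t • x := by module
    have hconv := hf.2 ha hx (sub_nonneg.2 ht₁) ht₀ (sub_add_cancel 1 t)
    have hle := hmin (hf.1 ha hx (sub_nonneg.2 ht₁) ht₀ (sub_add_cancel 1 t))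
    simp only [mem_ofPred_eq, Pi.add_apply, smul_eq_mul, norm_sub_rev a x, ← hr] at hconv hle
    simp only [mem_ofPred_eq, k, zero_smul, add_zero, zero_mul, hxt]
    linarith
  linarith [hk.hasDerivWithinAt.nonneg_of_isMinOn_Icc zero_lt_one hkmin]

end StrongConvexity

theorem strongConvexOn_mul_sq_norm_sub {E : Type*} [NormedAddCommGroup E] [InnerProductSpace ℝ E]
    {s : Set E} (hs : Convex ℝ s) (m : ℝ) (c : E) :
    StrongConvexOn s m fun x ↦ m / 2 * ‖x - c‖ ^ 2 := by
  rw [strongConvexOn_iff_convex]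
  have hlin : (fun x ↦ m / 2 * ‖x - c‖ ^ 2 - m / 2 * ‖x‖ ^ 2)
      = fun x ↦ ((-m) • innerSL ℝ c) x + m / 2 * ‖c‖ ^ 2 := by
    ext x
    rw [norm_sub_sq_real, smul_apply, innerSL_apply_apply, real_inner_comm, smul_eq_mul]
    ring
  rw [hlin]
  exact (((-m) • innerSL ℝ c).toLinearMap.convexOn hs).add_const _

theorem convexOn_sum_abs_sub {ι : Type*} [Fintype ι] {s : Set (EuclideanSpace ℝ ι)}
    (hs : Convex ℝ s) (c : EuclideanSpace ℝ ι) :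
    ConvexOn ℝ s fun x ↦ ∑ i, |x i - c i| := by
  refine ⟨hs, fun x _ y _ a b ha hb hab ↦ ?_⟩
  simp only [smul_eq_mul, Finset.mul_sum, ← Finset.sum_add_distrib]
  refine Finset.sum_le_sum fun i _ ↦ ?_
  calc |(a • x + b • y) i - c i| = |a * (x i - c i) + b * (y i - c i)| := by
        rw [PiLp.add_apply, PiLp.smul_apply, PiLp.smul_apply, smul_eq_mul, smul_eq_mul]
        congr 1
        linear_combination (c i) * hab
    _ ≤ a * |x i - c i| + b * |y i - c i| :=
        (abs_add_le _ _).trans_eq (by rw [abs_mul, abs_mul, abs_of_nonneg ha, abs_of_nonneg hb])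

theorem double_proximal_descent_with_smooth_part_general (n : ℕ)
    (C : Set (EuclideanSpace ℝ (Fin n))) (hC : Convex ℝ C)
    (φ ψ : EuclideanSpace ℝ (Fin n) → ℝ)
    (hφ : ConvexOn ℝ (Set.univ : Set (EuclideanSpace ℝ (Fin n))) φ)
    (hψ : Differentiable ℝ ψ)
    (x₀ : EuclideanSpace ℝ (Fin n)) (hx₀ : x₀ ∈ C)
    (σ₁ σ₂ : ℝ) (hσ₁ : 0 ≤ σ₁)
    (xp : EuclideanSpace ℝ (Fin n)) (hxp : xp ∈ C)
    (hmin : ∀ x ∈ C,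
      φ xp + ψ xp + σ₁ * (∑ i, |xp i - x₀ i|) + σ₂ / 2 * ‖xp - x₀‖ ^ 2
        ≤ φ x + ψ x + σ₁ * (∑ i, |x i - x₀ i|) + σ₂ / 2 * ‖x - x₀‖ ^ 2) :
    φ x₀ + ψ x₀ ≥ φ xp + ψ xp + σ₁ * (∑ i, |xp i - x₀ i|) + σ₂ * ‖xp - x₀‖ ^ 2
      + (ψ x₀ - ψ xp - ⟪gradient ψ xp, x₀ - xp⟫) := by
  set f : EuclideanSpace ℝ (Fin n) → ℝ :=
    fun x ↦ φ x + σ₁ * (∑ i, |x i - x₀ i|) + σ₂ / 2 * ‖x - x₀‖ ^ 2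
  have hconvex : ConvexOn ℝ C fun x ↦ φ x + σ₁ * (∑ i, |x i - x₀ i|) :=
    (hφ.subset (subset_univ C) hC).add ((convexOn_sum_abs_sub hC x₀).smul hσ₁)
  have hf : StrongConvexOn C σ₂ f :=
    hconvex.add_strongConvexOn (strongConvexOn_mul_sq_norm_sub hC σ₂ x₀)
  have hfmin : IsMinOn (f + ψ) C xp := fun x hx ↦ by
    simp only [mem_ofPred_eq, Pi.add_apply, f]
    linarith [hmin x hx]
  have hopt := hf.add_mul_sq_norm_sub_le_of_isMinOn_add (hψ xp).hasFDerivAt hxp hx₀ hfmin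
  rw [gradient, InnerProductSpace.toDual_symm_apply]
  simp only [f, sub_self, norm_zero, Finset.sum_const_zero, abs_zero, norm_sub_rev x₀ xp] at hopt
  linarith

/-- Double-proximal descent inequality with a differentiable part.
If `x⁺ ∈ C` minimizes `x ↦ φ(x) + ψ(x) + σ₁‖x − x₀‖₁ + (σ₂/2)‖x − x₀‖²` over a convex set
`C ∋ x₀`, with `φ` convex and `ψ` differentiable, then
`φ(x₀) + ψ(x₀) ≥ φ(x⁺) + ψ(x⁺) + σ₁‖x⁺−x₀‖₁ + σ₂‖x⁺−x₀‖²
  + (ψ(x₀) − ψ(x⁺) − ⟨∇ψ(x⁺), x₀ − x⁺⟩)`. -/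
theorem double_proximal_descent_with_smooth_part (n : ℕ) (hn : 0 < n)
    (C : Set (EuclideanSpace ℝ (Fin n))) (hC : Convex ℝ C)
    (φ ψ : EuclideanSpace ℝ (Fin n) → ℝ)
    (hφ : ConvexOn ℝ (Set.univ : Set (EuclideanSpace ℝ (Fin n))) φ)
    (hψ : Differentiable ℝ ψ)
    (x₀ : EuclideanSpace ℝ (Fin n)) (hx₀ : x₀ ∈ C)
    (σ₁ σ₂ : ℝ) (hσ₁ : 0 ≤ σ₁) (hσ₂ : 0 < σ₂)
    (xp : EuclideanSpace ℝ (Fin n)) (hxp : xp ∈ C)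
    (hmin : ∀ x ∈ C,
      φ xp + ψ xp + σ₁ * (∑ i, |xp i - x₀ i|) + σ₂ / 2 * ‖xp - x₀‖ ^ 2
        ≤ φ x + ψ x + σ₁ * (∑ i, |x i - x₀ i|) + σ₂ / 2 * ‖x - x₀‖ ^ 2) :
    φ x₀ + ψ x₀ ≥ φ xp + ψ xp + σ₁ * (∑ i, |xp i - x₀ i|) + σ₂ * ‖xp - x₀‖ ^ 2
      + (ψ x₀ - ψ xp - ⟪gradient ψ xp, x₀ - xp⟫) :=
  double_proximal_descent_with_smooth_part_general n C hC φ ψ hφ hψ x₀ hx₀ σ₁ σ₂ hσ₁ xp hxp hmin
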